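/- arXiv:1602.02605 — 2 statements merged into one kernel-verified Lean document; each statement's English description precedes it below -/
import Mathlib

section
/- Let $X$ and $Y$ be independent random variables with continuous distributions, where $\mathbb{P}(X>z)=z^{-1/\gamma_1}\ell_1(z)$ and $\mathbb{P}(Y>z)=z^{-1/\gamma_2}\ell_2(z)$ with $\ell_1,\ell_2$ slowly varying. Set $Z=\min(X,Y)$, $\delta=\mathbf{1}\{X\leq Y\}$, and $\overline{H}^{(1)}(v)=\mathbb{P}(Z>v,\delta=1)$, $\overline{H}(v)=\mathbb{P}(Z>v)$. Then $\lim_{v\to\infty}\overline{H}^{(1)}(v)/\overline{H}(v)=p$, where $p=\gamma_2/(\gamma_1+\gamma_2)$. -/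
/-!
Write `F̄, Ḡ` for the tails of `X, Y` and `M(v) = P(X > v, X ≤ Y) = ∫_v^∞ Ḡ dF`. On the geometric
grid `v, xv, x²v, …` (`x > 1`), monotonicity of `Ḡ` squeezes each slice `M(xᵏv) - M(xᵏ⁺¹v)` between
`(F̄(xᵏv) - F̄(xᵏ⁺¹v)) Ḡ(xᵏ⁺¹v)` and `(F̄(xᵏv) - F̄(xᵏ⁺¹v)) Ḡ(xᵏv)`, so `M(v)` lies between a lower
and an upper Riemann–Stieltjes sum. By independence `P(Z > v) = F̄(v) Ḡ(v)`; after dividing by it,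
regular variation turns the two sums, as `v → ∞`, into geometric sums in `r = x^(-1/γ₁)`,
`s = x^(-1/γ₂)`, which tend to `(1 - r) s / (1 - r s)` and `(1 - r) / (1 - r s)` as the number
of grid points grows. Both tend to `γ₂ / (γ₁ + γ₂)` as `x ↓ 1`, by comparing the derivatives of
`1 - x^(-1/γ₁)` and `1 - x^(-1/γ₁ - 1/γ₂)` at `1`.
-/

open Filter Real MeasureTheory ProbabilityTheory Topology Finset

def IsRegularlyVarying (F : ℝ → ℝ) (ρ : ℝ) : Prop :=
  ∀ c > 0, Tendsto (fun v => F (c * v) / F v) atTop (𝓝 (c ^ ρ))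

namespace IsRegularlyVarying

variable {F ℓ : ℝ → ℝ} {ρ : ℝ}

lemma of_eq_rpow_mul (hℓ : ∀ c > 0, Tendsto (fun z => ℓ (c * z) / ℓ z) atTop (𝓝 1))
    (hF : ∀ z > 0, F z = z ^ ρ * ℓ z) : IsRegularlyVarying F ρ := by
  intro c hc
  have h := (hℓ c hc).const_mul (c ^ ρ)
  rw [mul_one] at h
  refine h.congr' ?_
  filter_upwards [eventually_gt_atTop 0] with v hv
  rw [hF _ (mul_pos hc hv), hF _ hv, mul_rpow hc.le hv.le, mul_assoc, mul_div_assoc,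
    mul_div_mul_left _ _ (rpow_pos_of_pos hv ρ).ne']

lemma eventually_pos (hF : IsRegularlyVarying F ρ) (hF0 : ∀ v, 0 ≤ F v) :
    ∀ᶠ v in atTop, 0 < F v := by
  have h := (hF 1 one_pos).eventually_ne (b₂ := 0) (by simp)
  filter_upwards [h] with v hv
  exact (hF0 v).lt_of_ne' fun h0 => hv (by simp [h0])

lemma tendsto_pow_mul (hF : IsRegularlyVarying F ρ) {x : ℝ} (hx : 0 < x) (k : ℕ) :
    Tendsto (fun v => F (x ^ k * v) / F v) atTop (𝓝 ((x ^ ρ) ^ k)) := by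
  rw [← rpow_mul_natCast hx.le, mul_comm, rpow_natCast_mul hx.le]
  exact hF _ (pow_pos hx k)

end IsRegularlyVarying

lemma tendsto_div_of_hasDerivAt {f g : ℝ → ℝ} {f' g' x₀ : ℝ} (hf : HasDerivAt f f' x₀)
    (hg : HasDerivAt g g' x₀) (hf0 : f x₀ = 0) (hg0 : g x₀ = 0) (hg' : g' ≠ 0) :
    Tendsto (fun x => f x / g x) (𝓝[≠] x₀) (𝓝 (f' / g')) := by
  refine ((hasDerivAt_iff_tendsto_slope.1 hf).div (hasDerivAt_iff_tendsto_slope.1 hg) hg').congr'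
    ?_
  filter_upwards [self_mem_nhdsWithin] with x hx
  rw [Pi.div_apply, slope_def_field, slope_def_field, hf0, hg0, sub_zero, sub_zero,
    div_div_div_cancel_right₀ (sub_ne_zero.2 hx)]

lemma tendsto_one_sub_rpow_div_one_sub_rpow_mul_rpow {a b : ℝ} (hab : a + b ≠ 0) :
    Tendsto (fun x : ℝ => (1 - x ^ (-a)) / (1 - x ^ (-a) * x ^ (-b))) (𝓝[>] 1)
      (𝓝 (a / (a + b))) := by
  have hderiv (d : ℝ) : HasDerivAt (fun x : ℝ => 1 - x ^ (-d)) d 1 := by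
    simpa using ((hasDerivAt_rpow_const (x := 1) (p := -d) (Or.inl one_ne_zero)).const_sub 1)
  have h := (tendsto_div_of_hasDerivAt (hderiv a) (hderiv (a + b)) (by simp) (by simp) hab).mono_left
    (nhdsWithin_mono _ fun x (hx : 1 < x) => hx.ne')
  refine h.congr' ?_
  filter_upwards [self_mem_nhdsWithin] with x (hx : 1 < x)
  rw [← rpow_add (zero_lt_one.trans hx), neg_add]

lemma rpow_neg_mul_rpow_neg_lt_one {x a b : ℝ} (hx : 1 < x) (hab : 0 < a + b) :
    x ^ (-a) * x ^ (-b) < 1 := by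
  rw [← rpow_add (zero_lt_one.trans hx), ← neg_add]
  exact rpow_lt_one_of_one_lt_of_neg hx (neg_neg_of_pos hab)

lemma tendsto_sum_sub_pow_mul_pow_succ {r s : ℝ} (h0 : 0 ≤ r * s) (h1 : r * s < 1) :
    Tendsto (fun N => ∑ k ∈ range N, (r ^ k - r ^ (k + 1)) * s ^ (k + 1)) atTop
      (𝓝 ((1 - r) / (1 - r * s) * s)) := by
  have h := ((hasSum_geometric_of_lt_one h0 h1).mul_left ((1 - r) * s)).tendsto_sum_nat
  rw [show (1 - r) * s * (1 - r * s)⁻¹ = (1 - r) / (1 - r * s) * s by ring] at h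
  exact h.congr fun N => sum_congr rfl fun k _ => by ring

lemma tendsto_sum_sub_pow_mul_pow_add_pow_mul_pow {r s : ℝ} (h0 : 0 ≤ r * s) (h1 : r * s < 1) :
    Tendsto (fun N => ∑ k ∈ range N, (r ^ k - r ^ (k + 1)) * s ^ k + r ^ N * s ^ N) atTop
      (𝓝 ((1 - r) / (1 - r * s))) := by
  have h := ((hasSum_geometric_of_lt_one h0 h1).mul_left (1 - r)).tendsto_sum_nat.add
    (tendsto_pow_atTop_nhds_zero_of_lt_one h0 h1)
  rw [add_zero, ← div_eq_mul_inv] at h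
  refine h.congr fun N => ?_
  rw [mul_pow]
  congr 1
  exact sum_congr rfl fun k _ => by ring

section Squeeze

variable {F G M : ℝ → ℝ}

lemma sum_le_div_mul_of_le_sub (hlow : ∀ u w, u ≤ w → (F u - F w) * G w ≤ M u - M w)
    (hM0 : ∀ u, 0 ≤ M u) {x v : ℝ} (hx : 1 ≤ x) (hv : 0 ≤ v) (hFv : 0 < F v) (hGv : 0 < G v)
    (N : ℕ) :
    ∑ k ∈ range N, (F (x ^ k * v) / F v - F (x ^ (k + 1) * v) / F v) * (G (x ^ (k + 1) * v) / G v)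
      ≤ M v / (F v * G v) := by
  have hgrid (k : ℕ) : x ^ k * v ≤ x ^ (k + 1) * v :=
    mul_le_mul_of_nonneg_right (pow_le_pow_right₀ hx k.le_succ) hv
  have htelescope : ∑ k ∈ range N, (F (x ^ k * v) - F (x ^ (k + 1) * v)) * G (x ^ (k + 1) * v)
      ≤ M v - M (x ^ N * v) := by
    simpa using sum_le_sum (fun k _ => hlow _ _ (hgrid k))
      |>.trans_eq (sum_range_sub' (fun k => M (x ^ k * v)) N)
  rw [le_div_iff₀ (mul_pos hFv hGv), sum_mul]
  calc _ = ∑ k ∈ range N, (F (x ^ k * v) - F (x ^ (k + 1) * v)) * G (x ^ (k + 1) * v) :=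
        sum_congr rfl fun k _ => by field_simp
    _ ≤ M v := by linarith [hM0 (x ^ N * v)]

lemma div_mul_le_sum_add_of_sub_le (hup : ∀ u w, u ≤ w → M u - M w ≤ (F u - F w) * G u)
    (hM : ∀ u, M u ≤ F u * G u) {x v : ℝ} (hx : 1 ≤ x) (hv : 0 ≤ v) (hFv : 0 < F v)
    (hGv : 0 < G v) (N : ℕ) :
    M v / (F v * G v) ≤
      ∑ k ∈ range N, (F (x ^ k * v) / F v - F (x ^ (k + 1) * v) / F v) * (G (x ^ k * v) / G v)
        + F (x ^ N * v) / F v * (G (x ^ N * v) / G v) := by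
  have hgrid (k : ℕ) : x ^ k * v ≤ x ^ (k + 1) * v :=
    mul_le_mul_of_nonneg_right (pow_le_pow_right₀ hx k.le_succ) hv
  have htelescope : M v - M (x ^ N * v)
      ≤ ∑ k ∈ range N, (F (x ^ k * v) - F (x ^ (k + 1) * v)) * G (x ^ k * v) := by
    simpa using (sum_range_sub' (fun k => M (x ^ k * v)) N).symm.trans_le
      (sum_le_sum fun k _ => hup _ _ (hgrid k))
  rw [div_le_iff₀ (mul_pos hFv hGv), add_mul, sum_mul]
  calc M v ≤ ∑ k ∈ range N, (F (x ^ k * v) - F (x ^ (k + 1) * v)) * G (x ^ k * v)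
        + F (x ^ N * v) * G (x ^ N * v) := by linarith [hM (x ^ N * v)]
    _ = _ := by
      congr 1
      · exact sum_congr rfl fun k _ => by field_simp
      · field_simp

variable {a b : ℝ}

lemma eventually_lt_div_mul (hab : 0 < a + b) (hF : IsRegularlyVarying F (-a))
    (hG : IsRegularlyVarying G (-b)) (hF0 : ∀ v, 0 ≤ F v) (hG0 : ∀ v, 0 ≤ G v)
    (hlow : ∀ u w, u ≤ w → (F u - F w) * G w ≤ M u - M w) (hM0 : ∀ u, 0 ≤ M u)
    {c : ℝ} (hc : c < a / (a + b)) :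
    ∀ᶠ v in atTop, c < M v / (F v * G v) := by
  have hlim := (tendsto_one_sub_rpow_div_one_sub_rpow_mul_rpow hab.ne').mul
    ((continuousAt_rpow_const 1 (-b) (Or.inl one_ne_zero)).tendsto.mono_left nhdsWithin_le_nhds)
  rw [one_rpow, mul_one] at hlim
  obtain ⟨x, hxc, hx : 1 < x⟩ :=
    ((hlim.eventually (lt_mem_nhds hc)).and self_mem_nhdsWithin).exists
  have hx0 : 0 < x := zero_lt_one.trans hx
  have hrs := rpow_neg_mul_rpow_neg_lt_one hx hab
  obtain ⟨N, hN⟩ := ((tendsto_sum_sub_pow_mul_pow_succ (by positivity) hrs).eventually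
    (lt_mem_nhds hxc)).exists
  have hsum := tendsto_finsetSum (range N) fun k _ =>
    ((hF.tendsto_pow_mul hx0 k).sub (hF.tendsto_pow_mul hx0 (k + 1))).mul
      (hG.tendsto_pow_mul hx0 (k + 1))
  filter_upwards [hsum.eventually (lt_mem_nhds hN), hF.eventually_pos hF0,
    hG.eventually_pos hG0, eventually_ge_atTop 0] with v hcv hFv hGv hv
  exact hcv.trans_le (sum_le_div_mul_of_le_sub hlow hM0 hx.le hv hFv hGv N)

lemma eventually_div_mul_lt (hab : 0 < a + b) (hF : IsRegularlyVarying F (-a))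
    (hG : IsRegularlyVarying G (-b)) (hF0 : ∀ v, 0 ≤ F v) (hG0 : ∀ v, 0 ≤ G v)
    (hup : ∀ u w, u ≤ w → M u - M w ≤ (F u - F w) * G u) (hM : ∀ u, M u ≤ F u * G u)
    {c : ℝ} (hc : a / (a + b) < c) :
    ∀ᶠ v in atTop, M v / (F v * G v) < c := by
  obtain ⟨x, hxc, hx : 1 < x⟩ := (((tendsto_one_sub_rpow_div_one_sub_rpow_mul_rpow
    hab.ne').eventually (gt_mem_nhds hc)).and self_mem_nhdsWithin).exists
  have hx0 : 0 < x := zero_lt_one.trans hx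
  have hrs := rpow_neg_mul_rpow_neg_lt_one hx hab
  obtain ⟨N, hN⟩ := ((tendsto_sum_sub_pow_mul_pow_add_pow_mul_pow (by positivity) hrs).eventually
    (gt_mem_nhds hxc)).exists
  have hsum := (tendsto_finsetSum (range N) fun k _ =>
    ((hF.tendsto_pow_mul hx0 k).sub (hF.tendsto_pow_mul hx0 (k + 1))).mul
      (hG.tendsto_pow_mul hx0 k)).add ((hF.tendsto_pow_mul hx0 N).mul (hG.tendsto_pow_mul hx0 N))
  filter_upwards [hsum.eventually (gt_mem_nhds hN), hF.eventually_pos hF0,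
    hG.eventually_pos hG0, eventually_ge_atTop 0] with v hcv hFv hGv hv
  exact (div_mul_le_sum_add_of_sub_le hup hM hx.le hv hFv hGv N).trans_lt hcv

theorem tendsto_div_mul_of_isRegularlyVarying (hab : 0 < a + b) (hF : IsRegularlyVarying F (-a))
    (hG : IsRegularlyVarying G (-b)) (hF0 : ∀ v, 0 ≤ F v) (hG0 : ∀ v, 0 ≤ G v)
    (hlow : ∀ u w, u ≤ w → (F u - F w) * G w ≤ M u - M w)
    (hup : ∀ u w, u ≤ w → M u - M w ≤ (F u - F w) * G u)
    (hM0 : ∀ u, 0 ≤ M u) (hM : ∀ u, M u ≤ F u * G u) :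
    Tendsto (fun v => M v / (F v * G v)) atTop (𝓝 (a / (a + b))) :=
  tendsto_order.2 ⟨fun _ hc => eventually_lt_div_mul hab hF hG hF0 hG0 hlow hM0 hc,
    fun _ hc => eventually_div_mul_lt hab hF hG hF0 hG0 hup hM hc⟩

end Squeeze

section Censoring

variable {Ω : Type*} [MeasurableSpace Ω] {μ : Measure Ω} {X Y : Ω → ℝ}

lemma ProbabilityTheory.IndepFun.measureReal_inter_preimage_eq_mul (hind : IndepFun X Y μ)
    {s t : Set ℝ} (hs : MeasurableSet s) (ht : MeasurableSet t) :
    μ.real (X ⁻¹' s ∩ Y ⁻¹' t) = μ.real (X ⁻¹' s) * μ.real (Y ⁻¹' t) := by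
  simp only [measureReal_def, hind.measure_inter_preimage_eq_mul s t hs ht, ENNReal.toReal_mul]

lemma measureReal_lt_min_eq_mul (hind : IndepFun X Y μ) (v : ℝ) :
    μ.real {ω | v < min (X ω) (Y ω)} = μ.real {ω | v < X ω} * μ.real {ω | v < Y ω} := by
  have h : {ω | v < min (X ω) (Y ω)} = X ⁻¹' Set.Ioi v ∩ Y ⁻¹' Set.Ioi v := by
    ext ω
    simp
  rw [h]
  exact hind.measureReal_inter_preimage_eq_mul measurableSet_Ioi measurableSet_Ioi

variable [IsFiniteMeasure μ]

lemma measureReal_lt_and_le_le_mul (hind : IndepFun X Y μ) (v : ℝ) :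
    μ.real {ω | v < X ω ∧ X ω ≤ Y ω} ≤ μ.real {ω | v < X ω} * μ.real {ω | v < Y ω} := by
  rw [← measureReal_lt_min_eq_mul hind]
  exact measureReal_mono fun ω ⟨hv, hXY⟩ => lt_min hv (hv.trans_le hXY)

lemma measureReal_lt_inter_sub (hX : Measurable X) {E : Set Ω} (hE : MeasurableSet E)
    {u w : ℝ} (huw : u ≤ w) :
    μ.real ({ω | u < X ω} ∩ E) - μ.real ({ω | w < X ω} ∩ E) = μ.real (X ⁻¹' Set.Ioc u w ∩ E) := by
  have hsub : {ω | w < X ω} ∩ E ⊆ {ω | u < X ω} ∩ E :=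
    Set.inter_subset_inter_left E fun ω hw => huw.trans_lt hw
  rw [← measureReal_sdiff hsub ((hX measurableSet_Ioi).inter hE)]
  congr 1
  ext ω
  simp only [Set.mem_sdiff, Set.mem_inter_iff, Set.mem_ofPred_eq, Set.mem_preimage, Set.mem_Ioc]
  grind

lemma measureReal_lt_sub (hX : Measurable X) {u w : ℝ} (huw : u ≤ w) :
    μ.real {ω | u < X ω} - μ.real {ω | w < X ω} = μ.real (X ⁻¹' Set.Ioc u w) := by
  simpa using measureReal_lt_inter_sub (μ := μ) hX MeasurableSet.univ huw

lemma measureReal_lt_and_le_sub (hX : Measurable X) (hY : Measurable Y) {u w : ℝ} (huw : u ≤ w) :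
    μ.real {ω | u < X ω ∧ X ω ≤ Y ω} - μ.real {ω | w < X ω ∧ X ω ≤ Y ω}
      = μ.real (X ⁻¹' Set.Ioc u w ∩ {ω | X ω ≤ Y ω}) :=
  measureReal_lt_inter_sub hX (measurableSet_le hX hY) huw

lemma sub_mul_measureReal_lt_le_sub (hX : Measurable X) (hY : Measurable Y)
    (hind : IndepFun X Y μ) {u w : ℝ} (huw : u ≤ w) :
    (μ.real {ω | u < X ω} - μ.real {ω | w < X ω}) * μ.real {ω | w < Y ω}
      ≤ μ.real {ω | u < X ω ∧ X ω ≤ Y ω} - μ.real {ω | w < X ω ∧ X ω ≤ Y ω} := by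
  rw [measureReal_lt_sub hX huw, measureReal_lt_and_le_sub hX hY huw]
  refine (hind.measureReal_inter_preimage_eq_mul measurableSet_Ioc measurableSet_Ioi).symm.trans_le
    (measureReal_mono fun ω ⟨hXuw, hYw⟩ => ⟨hXuw, hXuw.2.trans (le_of_lt hYw)⟩)

lemma sub_le_sub_mul_measureReal_lt (hX : Measurable X) (hY : Measurable Y)
    (hind : IndepFun X Y μ) {u w : ℝ} (huw : u ≤ w) :
    μ.real {ω | u < X ω ∧ X ω ≤ Y ω} - μ.real {ω | w < X ω ∧ X ω ≤ Y ω}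
      ≤ (μ.real {ω | u < X ω} - μ.real {ω | w < X ω}) * μ.real {ω | u < Y ω} := by
  rw [measureReal_lt_sub hX huw, measureReal_lt_and_le_sub hX hY huw]
  refine (measureReal_mono ?_).trans_eq
    (hind.measureReal_inter_preimage_eq_mul measurableSet_Ioc measurableSet_Ioi)
  exact fun ω ⟨hXuw, hXY⟩ => ⟨hXuw, hXuw.1.trans_le hXY⟩

end Censoring

theorem stmt_8_general {Ω : Type*} [MeasureSpace Ω] [IsProbabilityMeasure (ℙ : Measure Ω)]
    (X Y : Ω → ℝ) (hX : Measurable X) (hY : Measurable Y) (hind : IndepFun X Y)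
    (γ₁ γ₂ : ℝ) (hγ₁ : 0 < γ₁) (hγ₂ : 0 < γ₂) (ℓ₁ ℓ₂ : ℝ → ℝ)
    (hℓ₁ : ∀ x > 0, Tendsto (fun z => ℓ₁ (x * z) / ℓ₁ z) atTop (nhds 1))
    (hℓ₂ : ∀ x > 0, Tendsto (fun z => ℓ₂ (x * z) / ℓ₂ z) atTop (nhds 1))
    (hFtail : ∀ z > 0, (ℙ {ω | z < X ω}).toReal = z ^ (-(1 / γ₁)) * ℓ₁ z)
    (hGtail : ∀ z > 0, (ℙ {ω | z < Y ω}).toReal = z ^ (-(1 / γ₂)) * ℓ₂ z) :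
    Tendsto (fun v => (ℙ {ω | v < min (X ω) (Y ω) ∧ X ω ≤ Y ω}).toReal /
        (ℙ {ω | v < min (X ω) (Y ω)}).toReal) atTop (nhds (γ₂ / (γ₁ + γ₂))) := by
  have hF : IsRegularlyVarying (fun z => (ℙ : Measure Ω).real {ω | z < X ω}) (-(1 / γ₁)) :=
    .of_eq_rpow_mul hℓ₁ hFtail
  have hG : IsRegularlyVarying (fun z => (ℙ : Measure Ω).real {ω | z < Y ω}) (-(1 / γ₂)) :=
    .of_eq_rpow_mul hℓ₂ hGtail
  have hlim := tendsto_div_mul_of_isRegularlyVarying (by positivity) hF hG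
    (fun _ => measureReal_nonneg) (fun _ => measureReal_nonneg)
    (fun _ _ => sub_mul_measureReal_lt_le_sub hX hY hind)
    (fun _ _ => sub_le_sub_mul_measureReal_lt hX hY hind)
    (fun _ => measureReal_nonneg) (measureReal_lt_and_le_le_mul hind)
  rw [show γ₂ / (γ₁ + γ₂) = 1 / γ₁ / (1 / γ₁ + 1 / γ₂) by field_simp; ring]
  refine hlim.congr fun v => ?_
  have huncensored : {ω | v < min (X ω) (Y ω) ∧ X ω ≤ Y ω} = {ω | v < X ω ∧ X ω ≤ Y ω} := by
    ext ω
    simp only [Set.mem_ofPred_eq, lt_min_iff]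
    grind
  simp only [← measureReal_def, huncensored, measureReal_lt_min_eq_mul hind]

/-- Under random censoring with heavy-tailed `X` and `Y`, the proportion of uncensored
observations in the tail converges: `H̄⁽¹⁾(v)/H̄(v) → p = γ₂/(γ₁+γ₂)` as `v → ∞`. -/
theorem stmt_8 {Ω : Type*} [MeasureSpace Ω] [IsProbabilityMeasure (ℙ : Measure Ω)]
    (X Y : Ω → ℝ) (hX : Measurable X) (hY : Measurable Y) (hind : IndepFun X Y)
    (hFcont : Continuous fun z => (ℙ {ω | X ω ≤ z}).toReal)
    (hGcont : Continuous fun z => (ℙ {ω | Y ω ≤ z}).toReal)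
    (γ₁ γ₂ : ℝ) (hγ₁ : 0 < γ₁) (hγ₂ : 0 < γ₂) (ℓ₁ ℓ₂ : ℝ → ℝ)
    (hℓ₁pos : ∀ z > 0, 0 < ℓ₁ z) (hℓ₂pos : ∀ z > 0, 0 < ℓ₂ z)
    (hℓ₁ : ∀ x > 0, Tendsto (fun z => ℓ₁ (x * z) / ℓ₁ z) atTop (nhds 1))
    (hℓ₂ : ∀ x > 0, Tendsto (fun z => ℓ₂ (x * z) / ℓ₂ z) atTop (nhds 1))
    (hFtail : ∀ z > 0, (ℙ {ω | z < X ω}).toReal = z ^ (-(1 / γ₁)) * ℓ₁ z)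
    (hGtail : ∀ z > 0, (ℙ {ω | z < Y ω}).toReal = z ^ (-(1 / γ₂)) * ℓ₂ z) :
    Tendsto (fun v => (ℙ {ω | v < min (X ω) (Y ω) ∧ X ω ≤ Y ω}).toReal /
        (ℙ {ω | v < min (X ω) (Y ω)}).toReal) atTop (nhds (γ₂ / (γ₁ + γ₂))) :=
  stmt_8_general X Y hX hY hind γ₁ γ₂ hγ₁ hγ₂ ℓ₁ ℓ₂ hℓ₁ hℓ₂ hFtail hGtail
end

section
/- Let $U$ be a random variable defined by $U=\delta H^{(1)}(Z)+(1-\delta)(\theta+H^{(0)}(Z))$, where $Z=\min(X,Y)$ for independent $X,Y$ with continuous distribution functions, $\delta=\mathbf{1}\{X\leq Y\}$, $H^{(j)}(v)=\mathbb{P}(Z\leq v,\delta=j)$ and $\theta=\mathbb{P}(\delta=1)$. Assume $H^{(1)}$ and $H^{(0)}$ are continuous. Then $U$ is uniformly distributed on $(0,1)$. -/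
/-!
On `{X ≤ Y}` the variable `U` equals `H⁽¹⁾(Z)`, and `H⁽¹⁾` is the distribution function of the
finite measure `B ↦ ℙ(Z ∈ B, X ≤ Y)` of mass `θ`. Since it is continuous, the probability integral
transform sends this measure to Lebesgue measure on `(0, θ]`. In the same way the part of `ℙ` on
`{X > Y}` is sent by `θ + H⁽⁰⁾(Z)` to Lebesgue measure on `(θ, 1]`, and the two pieces add up to
Lebesgue measure on `(0, 1)`.
-/

open MeasureTheory ProbabilityTheory Set Filter Topology

lemma MeasureTheory.Measure.map_piecewise {α β : Type*} [MeasurableSpace α] [MeasurableSpace β]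
    (μ : Measure α) {s : Set α} [DecidablePred (· ∈ s)] (hs : MeasurableSet s) {f g : α → β}
    (hf : Measurable f) (hg : Measurable g) :
    μ.map (s.piecewise f g) = (μ.restrict s).map f + (μ.restrict sᶜ).map g := by
  conv_lhs => rw [← Measure.restrict_add_restrict_compl (μ := μ) hs]
  rw [Measure.map_add _ _ (hf.piecewise hs hg), Measure.map_congr (piecewise_ae_eq_restrict hs),
    Measure.map_congr (piecewise_ae_eq_restrict_compl hs)]

lemma Real.map_const_add_volume_restrict_Ioc (c a b : ℝ) :
    (volume.restrict (Ioc a b)).map (c + ·) = volume.restrict (Ioc (c + a) (c + b)) := by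
  conv_rhs => rw [← map_add_left_eq_self volume c]
  rw [Measure.restrict_map (measurable_const_add c) measurableSet_Ioc, preimage_const_add_Ioc]
  simp

section DistributionFunction

variable (ν : Measure ℝ) [IsFiniteMeasure ν]

lemma tendsto_measureReal_Iic_atBot : Tendsto (fun v => ν.real (Iic v)) atBot (𝓝 0) := by
  have h := tendsto_measure_iInter_atBot (μ := ν) (fun _ => nullMeasurableSet_Iic)
    (monotone_Iic (α := ℝ)) ⟨0, measure_ne_top _ _⟩
  rw [iInter_Iic_eq_empty_iff.2 (by simp [not_bddBelow_univ]), measure_empty] at h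
  simpa [Function.comp_def, measureReal_def] using
    (ENNReal.tendsto_toReal ENNReal.zero_ne_top).comp h

lemma tendsto_measureReal_Iic_atTop :
    Tendsto (fun v => ν.real (Iic v)) atTop (𝓝 (ν.real univ)) :=
  (ENNReal.tendsto_toReal (measure_ne_top _ _)).comp (tendsto_measure_Iic_atTop ν)

variable {ν}

lemma exists_measureReal_Iic_eq (hF : Continuous fun v => ν.real (Iic v)) {t : ℝ}
    (ht₀ : 0 < t) (htm : t < ν.real univ) : ∃ v, ν.real (Iic v) = t :=
  mem_range_of_exists_le_of_exists_ge hF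
    ((tendsto_measureReal_Iic_atBot ν).eventually (eventually_le_nhds ht₀)).exists
    ((tendsto_measureReal_Iic_atTop ν).eventually (eventually_ge_nhds htm)).exists

lemma measureReal_setOf_measureReal_Iic_le (hF : Continuous fun v => ν.real (Iic v)) {t : ℝ}
    (ht₀ : 0 ≤ t) (htm : t < ν.real univ) : ν.real {v | ν.real (Iic v) ≤ t} = t := by
  set S := {v | ν.real (Iic v) ≤ t}
  have hmono : Monotone fun v => ν.real (Iic v) :=
    fun _ _ h => measureReal_mono (Iic_subset_Iic.2 h)
  have hbdd : BddAbove S := by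
    obtain ⟨b, hb⟩ :=
      ((tendsto_measureReal_Iic_atTop ν).eventually (eventually_gt_nhds htm)).exists
    exact ⟨b, fun v hv => le_of_not_gt fun hbv => (hb.trans_le ((hmono hbv.le).trans hv)).false⟩
  rcases S.eq_empty_or_nonempty with hS | hS
  · obtain rfl : t = 0 := by
      refine (ht₀.eq_or_lt.resolve_right fun ht => ?_).symm
      obtain ⟨v, hv⟩ := exists_measureReal_Iic_eq hF ht htm
      exact hS.subset (show v ∈ S from hv.le)
    rw [hS, measureReal_empty]
  · have hsup : sSup S ∈ S := (isClosed_le hF continuous_const).csSup_mem hS hbdd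
    have hS_eq : S = Iic (sSup S) :=
      Subset.antisymm (fun v hv => le_csSup hbdd hv) fun v hv => (hmono hv).trans hsup
    rw [hS_eq]
    refine le_antisymm hsup ?_
    rcases ht₀.eq_or_lt with rfl | ht
    · exact measureReal_nonneg
    · obtain ⟨v, hv⟩ := exists_measureReal_Iic_eq hF ht htm
      exact hv ▸ hmono (le_csSup hbdd hv.le)

theorem map_measureReal_Iic_eq_volume_restrict (hF : Continuous fun v => ν.real (Iic v)) :
    ν.map (fun v => ν.real (Iic v)) = volume.restrict (Ioc 0 (ν.real univ)) := by
  refine Measure.ext_of_Iic _ _ fun t => ?_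
  rw [Measure.map_apply hF.measurable measurableSet_Iic, Measure.restrict_apply measurableSet_Iic,
    inter_comm, Ioc_inter_Iic, Real.volume_Ioc, sub_zero]
  rcases lt_or_ge t 0 with ht | ht₀
  · have : (fun v => ν.real (Iic v)) ⁻¹' Iic t = ∅ :=
      eq_empty_of_forall_notMem fun v hv => (ht.trans_le measureReal_nonneg).not_ge hv
    rw [this, measure_empty, ENNReal.ofReal_of_nonpos (min_le_of_right_le ht.le)]
  rcases lt_or_ge t (ν.real univ) with htm | hmt
  · rw [min_eq_right htm.le, ← ofReal_measureReal]
    exact congrArg ENNReal.ofReal (measureReal_setOf_measureReal_Iic_le hF ht₀ htm)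
  · have : (fun v => ν.real (Iic v)) ⁻¹' Iic t = univ :=
      eq_univ_of_forall fun v => (measureReal_mono (subset_univ _)).trans hmt
    rw [this, min_eq_left hmt, ofReal_measureReal]

end DistributionFunction

theorem stmt_17_general {Ω : Type*} [MeasureSpace Ω] [IsProbabilityMeasure (ℙ : Measure Ω)]
    (X Y : Ω → ℝ) (hX : Measurable X) (hY : Measurable Y)
    (Z : Ω → ℝ) (hZ : Z = fun ω => min (X ω) (Y ω))
    (δ : Ω → ℝ) (hδ : δ = fun ω => if X ω ≤ Y ω then (1:ℝ) else 0)
    (H1 H0 : ℝ → ℝ)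
    (hH1 : ∀ v, H1 v = (ℙ {ω | Z ω ≤ v ∧ X ω ≤ Y ω}).toReal)
    (hH0 : ∀ v, H0 v = (ℙ {ω | Z ω ≤ v ∧ ¬ X ω ≤ Y ω}).toReal)
    (hH1cont : Continuous H1) (hH0cont : Continuous H0)
    (θ : ℝ) (hθ : θ = (ℙ {ω | X ω ≤ Y ω}).toReal)
    (U : Ω → ℝ) (hU : U = fun ω => δ ω * H1 (Z ω) + (1 - δ ω) * (θ + H0 (Z ω))) :
    Measure.map U ℙ = volume.restrict (Set.Ioo (0:ℝ) 1) := by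
  set μ : Measure Ω := ℙ
  set A : Set Ω := {ω | X ω ≤ Y ω}
  have hA : MeasurableSet A := measurableSet_le hX hY
  have hZm : Measurable Z := hZ ▸ hX.min hY
  have hU_eq : U = A.piecewise (H1 ∘ Z) ((θ + ·) ∘ H0 ∘ Z) := by
    funext ω
    by_cases hω : X ω ≤ Y ω <;> simp [hU, hδ, A, hω]
  have hH1_eq : H1 = fun v => ((μ.restrict A).map Z).real (Iic v) := by
    funext v
    rw [hH1, measureReal_def, Measure.map_apply hZm measurableSet_Iic, Measure.restrict_apply' hA]
    rfl
  have hH0_eq : H0 = fun v => ((μ.restrict Aᶜ).map Z).real (Iic v) := by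
    funext v
    rw [hH0, measureReal_def, Measure.map_apply hZm measurableSet_Iic,
      Measure.restrict_apply' hA.compl]
    rfl
  have hmass1 : ((μ.restrict A).map Z).real univ = θ := by
    rw [map_measureReal_apply hZm MeasurableSet.univ, preimage_univ,
      measureReal_restrict_apply_univ, hθ]
    rfl
  have hmass0 : ((μ.restrict Aᶜ).map Z).real univ = 1 - θ := by
    rw [map_measureReal_apply hZm MeasurableSet.univ, preimage_univ,
      measureReal_restrict_apply_univ, probReal_compl_eq_one_sub hA, hθ]
    rfl
  have hθ₀ : 0 ≤ θ := hθ ▸ measureReal_nonneg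
  have hθ₁ : θ ≤ 1 := hθ ▸ measureReal_le_one
  calc μ.map U
      = ((μ.restrict A).map Z).map H1 + (((μ.restrict Aᶜ).map Z).map H0).map (θ + ·) := by
        rw [hU_eq, Measure.map_piecewise _ hA (hH1cont.measurable.comp hZm)
          ((measurable_const_add θ).comp (hH0cont.measurable.comp hZm)),
          Measure.map_map hH1cont.measurable hZm, Measure.map_map hH0cont.measurable hZm,
          Measure.map_map (measurable_const_add θ) (hH0cont.measurable.comp hZm)]
    _ = volume.restrict (Ioc 0 θ) + volume.restrict (Ioc θ 1) := by
        nth_rw 1 [hH1_eq, hH0_eq]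
        rw [map_measureReal_Iic_eq_volume_restrict (hH1_eq ▸ hH1cont),
          map_measureReal_Iic_eq_volume_restrict (hH0_eq ▸ hH0cont), hmass1, hmass0,
          Real.map_const_add_volume_restrict_Ioc, add_zero, add_sub_cancel]
    _ = volume.restrict (Ioo 0 1) := by
        rw [← Measure.restrict_union (Ioc_disjoint_Ioc_of_le le_rfl) measurableSet_Ioc,
          Ioc_union_Ioc_eq_Ioc hθ₀ hθ₁, Measure.restrict_congr_set Ioo_ae_eq_Ioc]

/-- Einmahl–Koning representation: with `Z = min(X,Y)`, `δ = 1{X ≤ Y}`,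
`H⁽ʲ⁾(v) = ℙ(Z ≤ v, δ = j)` and `θ = ℙ(δ = 1)`, the random variable
`U = δ H⁽¹⁾(Z) + (1-δ)(θ + H⁽⁰⁾(Z))` is uniformly distributed on `(0,1)`. -/
theorem stmt_17 {Ω : Type*} [MeasureSpace Ω] [IsProbabilityMeasure (ℙ : Measure Ω)]
    (X Y : Ω → ℝ) (hX : Measurable X) (hY : Measurable Y) (hind : IndepFun X Y)
    (hFcont : Continuous fun z => (ℙ {ω | X ω ≤ z}).toReal)
    (hGcont : Continuous fun z => (ℙ {ω | Y ω ≤ z}).toReal)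
    (Z : Ω → ℝ) (hZ : Z = fun ω => min (X ω) (Y ω))
    (δ : Ω → ℝ) (hδ : δ = fun ω => if X ω ≤ Y ω then (1:ℝ) else 0)
    (H1 H0 : ℝ → ℝ)
    (hH1 : ∀ v, H1 v = (ℙ {ω | Z ω ≤ v ∧ X ω ≤ Y ω}).toReal)
    (hH0 : ∀ v, H0 v = (ℙ {ω | Z ω ≤ v ∧ ¬ X ω ≤ Y ω}).toReal)
    (hH1cont : Continuous H1) (hH0cont : Continuous H0)
    (θ : ℝ) (hθ : θ = (ℙ {ω | X ω ≤ Y ω}).toReal)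
    (U : Ω → ℝ) (hU : U = fun ω => δ ω * H1 (Z ω) + (1 - δ ω) * (θ + H0 (Z ω))) :
    Measure.map U ℙ = volume.restrict (Set.Ioo (0:ℝ) 1) :=
  stmt_17_general X Y hX hY Z hZ δ hδ H1 H0 hH1 hH0 hH1cont hH0cont θ hθ U hU
end
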